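/- Partial trace does not increase the max-relative entropy: for bipartite density matrices ρ_{AB}, σ_{AB} with supp(ρ_{AB}) ⊆ supp(σ_{AB}), D_max(ρ_A‖σ_A) ≤ D_max(ρ_{AB}‖σ_{AB}). -/

import Mathlib

open Matrix BigOperators Classical ComplexOrder

noncomputable section

variable {n : Type*} [Fintype n] [DecidableEq n]

/-- positive-semidefinite square root, extended by 0. -/
noncomputable def msqrt (A : Matrix n n ℂ) : Matrix n n ℂ :=
  if h : A.PosSemidef then
    (h.1.eigenvectorUnitary : Matrix n n ℂ) *
      diagonal ((↑) ∘ (fun x : ℝ => Real.sqrt x) ∘ h.1.eigenvalues) *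
      (star (h.1.eigenvectorUnitary : Matrix n n ℂ))
  else 0

/-- trace norm ‖X‖₁ = Tr √(XᴴX). -/
noncomputable def traceNorm (X : Matrix n n ℂ) : ℝ :=
  (msqrt (Xᴴ * X)).trace.re

/-- fidelity F(ρ,σ) = ‖√ρ√σ‖₁. -/
noncomputable def fidelity (ρ σ : Matrix n n ℂ) : ℝ :=
  traceNorm (msqrt ρ * msqrt σ)

/-- purified distance. -/
noncomputable def purifiedDist (ρ σ : Matrix n n ℂ) : ℝ :=
  Real.sqrt (1 - (fidelity ρ σ)^2)

def IsDensityMatrix (ρ : Matrix n n ℂ) : Prop := ρ.PosSemidef ∧ ρ.trace = 1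

/-- max-relative entropy. -/
noncomputable def Dmax (ρ σ : Matrix n n ℂ) : ℝ :=
  sInf {l : ℝ | ((((2:ℝ)^l : ℝ) : ℂ) • σ - ρ).PosSemidef}

/-- smooth hypothesis testing divergence. -/
noncomputable def DH (ε : ℝ) (ρ τ : Matrix n n ℂ) : ℝ :=
  sSup {r : ℝ | ∃ P : Matrix n n ℂ, P.PosSemidef ∧ ((1 : Matrix n n ℂ) - P).PosSemidef ∧
    1 - ε ≤ ((P * ρ).trace).re ∧ r = - Real.logb 2 ((P * τ).trace).re}

/-- functional calculus for hermitian matrices (0 otherwise). -/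
noncomputable def hermCFC (f : ℝ → ℝ) (A : Matrix n n ℂ) : Matrix n n ℂ :=
  if h : A.IsHermitian then
    (Matrix.IsHermitian.eigenvectorUnitary h : Matrix n n ℂ) *
      Matrix.diagonal (fun i => (f (h.eigenvalues i) : ℂ)) *
      (star (Matrix.IsHermitian.eigenvectorUnitary h : Matrix n n ℂ))
  else 0

/-- von Neumann entropy (base 2). -/
noncomputable def vnEntropy (ρ : Matrix n n ℂ) : ℝ :=
  if h : ρ.IsHermitian then -∑ i, (h.eigenvalues i) * Real.logb 2 (h.eigenvalues i) else 0

end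

/-!
Partial trace is a positive, trace-preserving linear map, so it preserves every operator inequality
`ρ ≤ 2^λ σ`; the feasible set of `D_max(ρ‖σ)` is thus contained in that of `D_max(ρ_A‖σ_A)`.
For the infima to compare, the larger set must be bounded below (taking traces forces `2^λ ≥ 1`)
and the smaller one nonempty. Nonemptiness is where the support condition enters: with `P` the
projection onto the support of `σ`, one has `ρ = PρP ≤ Tr ρ · P ≤ Tr ρ · t · σ` for some `t`.
-/

open scoped MatrixOrder

namespace Matrix

lemma mul_eq_zero_of_ker_le {n m k R : Type*} [Fintype m] [NonUnitalNonAssocSemiring R]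
    {ρ σ : Matrix n m R} (hker : ∀ v, σ *ᵥ v = 0 → ρ *ᵥ v = 0) {X : Matrix m k R}
    (hX : σ * X = 0) : ρ * X = 0 := by
  ext i j
  exact congrFun (hker (fun l => X l j) (funext fun i' => congrFun (congrFun hX i') j)) i

lemma one_le_of_le_smul {n : Type*} [Fintype n] {ρ σ : Matrix n n ℂ} (hρ : ρ.trace = 1)
    (hσ : σ.trace = 1) {c : ℝ} (h : ρ ≤ (c : ℂ) • σ) : 1 ≤ c := by
  have := h.trace_nonneg
  rw [trace_sub, trace_smul, hρ, hσ, smul_eq_mul, mul_one, sub_nonneg] at this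
  exact_mod_cast this

section SupportProjection

variable {n : Type*} [Fintype n] [DecidableEq n] {A : Matrix n n ℂ}

lemma hermCFC_of_isHermitian (hA : A.IsHermitian) (f : ℝ → ℝ) :
    hermCFC f A = (hA.eigenvectorUnitary : Matrix n n ℂ) *
      diagonal (fun i => (f (hA.eigenvalues i) : ℂ)) *
      star (hA.eigenvectorUnitary : Matrix n n ℂ) :=
  dif_pos hA

lemma hermCFC_id (hA : A.IsHermitian) : hermCFC (fun x => x) A = A := by
  rw [hermCFC_of_isHermitian hA]
  conv_rhs => rw [hA.spectral_theorem]
  rfl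

lemma hermCFC_const (hA : A.IsHermitian) (c : ℝ) : hermCFC (fun _ => c) A = (c : ℂ) • 1 := by
  rw [hermCFC_of_isHermitian hA, ← smul_one_eq_diagonal, mul_smul_comm, mul_one, smul_mul_assoc,
    Unitary.mul_star_self_of_mem hA.eigenvectorUnitary.2]

lemma hermCFC_mul (hA : A.IsHermitian) (f g : ℝ → ℝ) :
    hermCFC f A * hermCFC g A = hermCFC (fun x => f x * g x) A := by
  simp only [hermCFC_of_isHermitian hA, Matrix.mul_assoc, ← Matrix.mul_assoc (star _),
    Unitary.coe_star_mul_self, Matrix.one_mul, ← Matrix.mul_assoc (diagonal _),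
    diagonal_mul_diagonal, Complex.ofReal_mul]

lemma conjTranspose_hermCFC (hA : A.IsHermitian) (f : ℝ → ℝ) : (hermCFC f A)ᴴ = hermCFC f A := by
  simp [hermCFC_of_isHermitian hA, conjTranspose_mul, Matrix.mul_assoc, star_eq_conjTranspose,
    Pi.star_def]

lemma hermCFC_le_hermCFC (hA : A.IsHermitian) {f g : ℝ → ℝ}
    (hfg : ∀ i, f (hA.eigenvalues i) ≤ g (hA.eigenvalues i)) : hermCFC f A ≤ hermCFC g A := by
  rw [hermCFC_of_isHermitian hA, hermCFC_of_isHermitian hA]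
  refine star_right_conjugate_le_conjugate ?_ _
  rw [le_iff, diagonal_sub, posSemidef_diagonal_iff]
  intro i
  simpa [sub_nonneg] using hfg i

lemma PosSemidef.le_trace_smul_one (hA : A.PosSemidef) : A ≤ A.trace • 1 := by
  have hle : ∀ i, hA.1.eigenvalues i ≤ ∑ j, hA.1.eigenvalues j := fun i =>
    Finset.single_le_sum (fun j _ => hA.eigenvalues_nonneg j) (Finset.mem_univ i)
  calc A = hermCFC (fun x => x) A := (hermCFC_id hA.1).symm
    _ ≤ hermCFC (fun _ => ∑ j, hA.1.eigenvalues j) A := hermCFC_le_hermCFC hA.1 hle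
    _ = A.trace • 1 := by
        rw [hermCFC_const hA.1, hA.1.trace_eq_sum_eigenvalues]
        push_cast
        rfl

noncomputable def supportProj (A : Matrix n n ℂ) : Matrix n n ℂ :=
  hermCFC (fun x => if x = 0 then 0 else 1) A

lemma mul_supportProj (hA : A.IsHermitian) : A * supportProj A = A := by
  have hmul := hermCFC_mul hA (fun x => x) (fun x => if x = 0 then 0 else 1)
  rw [hermCFC_id hA] at hmul
  rw [supportProj, hmul]
  conv_rhs => rw [← hermCFC_id hA]
  congr 1
  funext x
  split_ifs with hx <;> simp [hx]

lemma supportProj_mul_self (hA : A.IsHermitian) :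
    supportProj A * supportProj A = supportProj A := by
  rw [supportProj, hermCFC_mul hA]
  congr 1
  funext x
  split_ifs <;> simp

lemma conjTranspose_supportProj (hA : A.IsHermitian) : (supportProj A)ᴴ = supportProj A :=
  conjTranspose_hermCFC hA _

lemma PosSemidef.exists_supportProj_le_smul (hA : A.PosSemidef) :
    ∃ t : ℝ, supportProj A ≤ (t : ℂ) • A := by
  set d := hA.1.eigenvalues
  have hd_inv_le : ∀ i, (d i)⁻¹ ≤ ∑ j, (d j)⁻¹ := fun i =>
    Finset.single_le_sum (fun j _ => inv_nonneg.2 (hA.eigenvalues_nonneg j)) (Finset.mem_univ i)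
  -- `0⁻¹ = 0`, so the zero eigenvalues do not contribute to `t`.
  refine ⟨∑ i, (d i)⁻¹, ?_⟩
  calc supportProj A ≤ hermCFC (fun x => (∑ i, (d i)⁻¹) * x) A := by
        refine hermCFC_le_hermCFC hA.1 fun i => ?_
        split_ifs with hi
        · exact mul_nonneg ((inv_nonneg.2 (hA.eigenvalues_nonneg i)).trans (hd_inv_le i))
            (hA.eigenvalues_nonneg i)
        · calc (1 : ℝ) = (d i)⁻¹ * d i := (inv_mul_cancel₀ hi).symm
            _ ≤ (∑ j, (d j)⁻¹) * d i :=
                mul_le_mul_of_nonneg_right (hd_inv_le i) (hA.eigenvalues_nonneg i)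
    _ = _ := by rw [← hermCFC_mul hA.1, hermCFC_const hA.1, hermCFC_id hA.1, smul_one_mul]

lemma conj_supportProj_of_ker_le {ρ σ : Matrix n n ℂ} (hρ : ρ.IsHermitian) (hσ : σ.IsHermitian)
    (hker : ∀ v, σ *ᵥ v = 0 → ρ *ᵥ v = 0) :
    star (supportProj σ) * ρ * supportProj σ = ρ := by
  have hρP : ρ * supportProj σ = ρ := by
    have := mul_eq_zero_of_ker_le hker (X := 1 - supportProj σ)
      (by rw [Matrix.mul_sub, mul_supportProj hσ, Matrix.mul_one, sub_self])
    rwa [Matrix.mul_sub, Matrix.mul_one, sub_eq_zero, eq_comm] at this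
  have hPρ : star (supportProj σ) * ρ = ρ := by
    rw [star_eq_conjTranspose, ← hρ.eq, ← conjTranspose_mul, hρP]
  rw [hPρ, hρP]

theorem PosSemidef.exists_le_smul_of_ker_le {ρ σ : Matrix n n ℂ} (hρ : ρ.PosSemidef)
    (hσ : σ.PosSemidef) (hker : ∀ v, σ *ᵥ v = 0 → ρ *ᵥ v = 0) :
    ∃ t : ℝ, ρ ≤ (ρ.trace * t) • σ := by
  obtain ⟨t, ht⟩ := hσ.exists_supportProj_le_smul
  refine ⟨t, ?_⟩
  calc ρ = star (supportProj σ) * ρ * supportProj σ :=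
        (conj_supportProj_of_ker_le hρ.1 hσ.1 hker).symm
    _ ≤ star (supportProj σ) * (ρ.trace • 1) * supportProj σ :=
        star_left_conjugate_le_conjugate hρ.le_trace_smul_one _
    _ = ρ.trace • supportProj σ := by
        rw [mul_smul_comm, Matrix.mul_one, smul_mul_assoc, star_eq_conjTranspose,
          conjTranspose_supportProj hσ.1, supportProj_mul_self hσ.1]
    _ ≤ (ρ.trace * t) • σ := by
        rw [le_iff, mul_smul, ← smul_sub]
        exact ht.smul hρ.trace_nonneg

end SupportProjection

section PartialTrace

variable {A B R : Type*} [Fintype B]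

def partialTrace [Semiring R] : Matrix (A × B) (A × B) R →ₗ[R] Matrix A A R where
  toFun M := of fun i j => ∑ k, M (i, k) (j, k)
  map_add' M N := by ext; simp [Finset.sum_add_distrib]
  map_smul' c M := by ext; simp [Finset.mul_sum]

lemma partialTrace_eq_sum_submatrix [Semiring R] (M : Matrix (A × B) (A × B) R) :
    partialTrace M = ∑ k, M.submatrix (·, k) (·, k) := by
  ext i j
  simp [partialTrace, sum_apply]

lemma trace_partialTrace [Fintype A] [Semiring R] (M : Matrix (A × B) (A × B) R) :
    (partialTrace M).trace = M.trace := by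
  simp [partialTrace, trace, Fintype.sum_prod_type]

lemma PosSemidef.partialTrace [Ring R] [PartialOrder R] [StarRing R] [AddLeftMono R]
    {M : Matrix (A × B) (A × B) R} (hM : M.PosSemidef) : (partialTrace M).PosSemidef := by
  rw [partialTrace_eq_sum_submatrix]
  exact posSemidef_sum _ fun k _ => hM.submatrix _

end PartialTrace

end Matrix

theorem dmax_map_le {m n : Type*} [Fintype m] [DecidableEq m] [Fintype n] [DecidableEq n]
    (Φ : Matrix m m ℂ →ₗ[ℂ] Matrix n n ℂ) (hΦ_pos : ∀ X, X.PosSemidef → (Φ X).PosSemidef)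
    (hΦ_trace : ∀ X, (Φ X).trace = X.trace) {ρ σ : Matrix m m ℂ} (hρ : IsDensityMatrix ρ)
    (hσ : IsDensityMatrix σ) (hker : ∀ v, σ *ᵥ v = 0 → ρ *ᵥ v = 0) :
    Dmax (Φ ρ) (Φ σ) ≤ Dmax ρ σ := by
  refine csInf_le_csInf ⟨0, fun l hl => ?_⟩ ?_ fun l hl => ?_
  · have := one_le_of_le_smul ((hΦ_trace ρ).trans hρ.2) ((hΦ_trace σ).trans hσ.2) hl
    rwa [← Real.rpow_le_rpow_left_iff one_lt_two, Real.rpow_zero]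
  · obtain ⟨t, ht⟩ := hρ.1.exists_le_smul_of_ker_le hσ.1 hker
    rw [hρ.2, one_mul] at ht
    have ht_pos : 0 < t := one_pos.trans_le (one_le_of_le_smul hρ.2 hσ.2 ht)
    exact ⟨Real.logb 2 t, by rwa [Set.mem_ofPred_eq, Real.rpow_logb two_pos (by norm_num) ht_pos]⟩
  · have := hΦ_pos _ hl
    rwa [map_sub, map_smul] at this

open Matrix ComplexOrder in
/-- Partial trace does not increase the max-relative entropy:
`D_max(ρ_A‖σ_A) ≤ D_max(ρ_{AB}‖σ_{AB})` when `supp(ρ_{AB}) ⊆ supp(σ_{AB})`. -/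
theorem dmax_partialTrace {A B : Type*} [Fintype A] [DecidableEq A] [Fintype B] [DecidableEq B]
    (ρ σ : Matrix (A × B) (A × B) ℂ) (hρ : IsDensityMatrix ρ) (hσ : IsDensityMatrix σ)
    (hsupp : ∀ v : A × B → ℂ, σ *ᵥ v = 0 → ρ *ᵥ v = 0) :
    Dmax (Matrix.of fun i j => ∑ k : B, ρ (i, k) (j, k))
        (Matrix.of fun i j => ∑ k : B, σ (i, k) (j, k)) ≤ Dmax ρ σ :=
  dmax_map_le partialTrace (fun _ hX => hX.partialTrace) trace_partialTrace hρ hσ hsupp
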